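/- Let F be a field and J an infinite set. The trace form κ on sl_J(F), defined by κ(f, g) = tr(f ∘ g) (note that f ∘ g is finitary whenever f and g are), is a symmetric bilinear form that is invariant, i.e. κ([h, f], g) + κ(f, [h, g]) = 0 for all f, g, h ∈ sl_J(F), and nondegenerate, i.e. if f ∈ sl_J(F) satisfies κ(f, g) = 0 for all g ∈ sl_J(F), then f = 0. -/

import Mathlib

set_option maxHeartbeats 1000000
set_option synthInstance.maxHeartbeats 1000000

attribute [local instance 100] LieRing.ofAssociativeRing

/-- An `F`-linear endomorphism `f` of `ι →₀ F` is *finitary* if the set of pairs `(i, j)`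
with `(f eⱼ) i ≠ 0` (where `eⱼ = single j 1` are the standard basis vectors) is finite. -/
def Finitary (F : Type*) [Field F] {ι : Type*} (f : Module.End F (ι →₀ F)) : Prop :=
  {p : ι × ι | f (Finsupp.single p.2 1) p.1 ≠ 0}.Finite

/-- The trace of a (finitary) endomorphism of `ι →₀ F`. -/
noncomputable def trF (F : Type*) [Field F] {ι : Type*} (f : Module.End F (ι →₀ F)) : F :=
  ∑ᶠ j, f (Finsupp.single j 1) j

section SL

variable {F : Type*} [Field F] {ι : Type*}

lemma end_apply_eq_sum (f : Module.End F (ι →₀ F)) (v : ι →₀ F) :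
    f v = ∑ i ∈ v.support, v i • f (Finsupp.single i 1) := by
  conv_lhs => rw [← Finsupp.sum_single v, Finsupp.sum, map_sum]
  exact Finset.sum_congr rfl fun i _ => by rw [← Finsupp.smul_single_one, map_smul]

lemma column_eq_zero {f : Module.End F (ι →₀ F)} {j : ι}
    (h : ∀ i, f (Finsupp.single j 1) i = 0) : f (Finsupp.single j 1) = 0 := by
  ext i; simpa using h i

namespace Finitary

variable {f g : Module.End F (ι →₀ F)}

lemma add (hf : Finitary F f) (hg : Finitary F g) : Finitary F (f + g) := by
  refine (hf.union hg).subset fun p hp => ?_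
  by_contra h
  simp only [Set.mem_union, Set.mem_setOf_eq, not_or, not_not] at h
  exact hp (by simp [LinearMap.add_apply, Finsupp.add_apply, h.1, h.2])

lemma zero : Finitary F (0 : Module.End F (ι →₀ F)) := by
  have h : {p : ι × ι | (0 : Module.End F (ι →₀ F)) (Finsupp.single p.2 1) p.1 ≠ 0} = ∅ := by
    ext p; simp
  unfold Finitary
  rw [h]
  exact Set.finite_empty

lemma smul (c : F) (hf : Finitary F f) : Finitary F (c • f) := by
  refine hf.subset fun p hp => ?_
  simp only [Set.mem_setOf_eq, LinearMap.smul_apply, Finsupp.smul_apply] at hp ⊢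
  intro h
  exact hp (by simp [h])

lemma neg (hf : Finitary F f) : Finitary F (-f) := by
  refine hf.subset fun p hp => ?_
  simp only [Set.mem_setOf_eq, LinearMap.neg_apply, Finsupp.neg_apply, neg_ne_zero] at hp ⊢
  exact hp

lemma sub (hf : Finitary F f) (hg : Finitary F g) : Finitary F (f - g) := by
  have h : f - g = f + -g := sub_eq_add_neg f g
  rw [h]
  exact hf.add hg.neg

lemma mul (hf : Finitary F f) (hg : Finitary F g) : Finitary F (f * g) := by
  refine ((hf.image Prod.fst).prod (hg.image Prod.snd)).subset ?_
  rintro ⟨k, l⟩ hkl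
  simp only [Set.mem_setOf_eq, Module.End.mul_apply] at hkl
  constructor
  · -- k ∈ Prod.fst '' S_f
    by_contra hk
    apply hkl
    rw [end_apply_eq_sum f (g (Finsupp.single l 1)), Finset.sum_apply']
    refine Finset.sum_eq_zero fun i _ => ?_
    have : f (Finsupp.single i 1) k = 0 := by
      by_contra h
      exact hk ⟨(k, i), h, rfl⟩
    simp [this]
  · -- l ∈ Prod.snd '' S_g
    by_contra hl
    apply hkl
    have : g (Finsupp.single l 1) = 0 := by
      refine column_eq_zero fun i => ?_
      by_contra h
      exact hl ⟨(i, l), h, rfl⟩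
    rw [this, map_zero]
    simp

end Finitary

lemma trace_support_finite {f : Module.End F (ι →₀ F)} (hf : Finitary F f) :
    (Function.support fun j => f (Finsupp.single j 1) j).Finite :=
  (hf.image Prod.fst).subset fun j hj => ⟨(j, j), hj, rfl⟩

lemma trF_add {f g : Module.End F (ι →₀ F)} (hf : Finitary F f) (hg : Finitary F g) :
    trF F (f + g) = trF F f + trF F g := by
  unfold trF
  rw [← finsum_add_distrib (trace_support_finite hf) (trace_support_finite hg)]
  simp [LinearMap.add_apply]

lemma trF_zero : trF F (0 : Module.End F (ι →₀ F)) = 0 := by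
  unfold trF; simp

lemma trF_neg (f : Module.End F (ι →₀ F)) : trF F (-f) = -trF F f := by
  unfold trF
  rw [← finsum_neg_distrib]
  simp

lemma trF_sub {f g : Module.End F (ι →₀ F)} (hf : Finitary F f) (hg : Finitary F g) :
    trF F (f - g) = trF F f - trF F g := by
  have h2 : f - g = f + -g := sub_eq_add_neg f g
  have h := trF_add hf hg.neg
  rw [trF_neg] at h
  rw [h2, h, sub_eq_add_neg]

lemma trF_smul (c : F) (f : Module.End F (ι →₀ F)) : trF F (c • f) = c * trF F f := by
  unfold trF
  rcases (Function.support fun j => f (Finsupp.single j 1) j).finite_or_infinite with h | h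
  · rw [mul_finsum' _ _ h]; simp
  · by_cases hc : c = 0
    · simp [hc]
    · have h2 : (Function.support fun j => (c • f) (Finsupp.single j 1) j).Infinite := by
        refine h.mono fun j hj => ?_
        simp only [Function.mem_support, LinearMap.smul_apply, Finsupp.smul_apply,
          smul_eq_mul] at hj ⊢
        exact mul_ne_zero hc hj
      rw [finsum_of_infinite_support h, finsum_of_infinite_support h2, mul_zero]

end SL

section SL2

variable {F : Type*} [Field F] {ι : Type*}

lemma entry_formula {g : Module.End F (ι →₀ F)}
    (f : Module.End F (ι →₀ F)) (T : Finset ι)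
    (hT : ∀ p : ι × ι, g (Finsupp.single p.2 1) p.1 ≠ 0 → p.1 ∈ T)
    (j k : ι) :
    (f * g) (Finsupp.single j 1) k = ∑ i ∈ T, g (Finsupp.single j 1) i * f (Finsupp.single i 1) k := by
  classical
  rw [Module.End.mul_apply, end_apply_eq_sum f (g (Finsupp.single j 1)), Finset.sum_apply']
  rw [Finset.sum_subset (fun i hi => hT (i, j) (Finsupp.mem_support_iff.mp hi))]
  · exact Finset.sum_congr rfl fun i _ => by simp [smul_eq_mul]
  · intro i _ hi
    rw [Finsupp.notMem_support_iff.mp hi]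
    simp

lemma trF_mul_comm {f g : Module.End F (ι →₀ F)} (hf : Finitary F f) (hg : Finitary F g) :
    trF F (f * g) = trF F (g * f) := by
  classical
  obtain ⟨T, hfT, hgT⟩ :
      ∃ T : Finset ι,
        (∀ p : ι × ι, f (Finsupp.single p.2 1) p.1 ≠ 0 → p.1 ∈ T ∧ p.2 ∈ T) ∧
        (∀ p : ι × ι, g (Finsupp.single p.2 1) p.1 ≠ 0 → p.1 ∈ T ∧ p.2 ∈ T) := by
    refine ⟨(hf.toFinset ∪ hg.toFinset).biUnion fun p => {p.1, p.2}, fun p hp => ?_, fun p hp => ?_⟩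
    · have hmem : p ∈ hf.toFinset ∪ hg.toFinset :=
        Finset.mem_union_left _ (hf.mem_toFinset.mpr hp)
      exact ⟨Finset.mem_biUnion.mpr ⟨p, hmem, by simp⟩, Finset.mem_biUnion.mpr ⟨p, hmem, by simp⟩⟩
    · have hmem : p ∈ hf.toFinset ∪ hg.toFinset :=
        Finset.mem_union_right _ (hg.mem_toFinset.mpr hp)
      exact ⟨Finset.mem_biUnion.mpr ⟨p, hmem, by simp⟩, Finset.mem_biUnion.mpr ⟨p, hmem, by simp⟩⟩
  -- columns outside T vanish
  have hgcol : ∀ j, j ∉ T → g (Finsupp.single j 1) = 0 := fun j hj =>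
    column_eq_zero fun i => by
      by_contra h
      exact hj ((hgT (i, j) h).2)
  have hfcol : ∀ j, j ∉ T → f (Finsupp.single j 1) = 0 := fun j hj =>
    column_eq_zero fun i => by
      by_contra h
      exact hj ((hfT (i, j) h).2)
  have hsupfg : (Function.support fun j => (f * g) (Finsupp.single j 1) j) ⊆ (T : Set ι) := by
    intro j hj
    by_contra hjT
    apply hj
    simp [Module.End.mul_apply, hgcol j hjT]
  have hsupgf : (Function.support fun j => (g * f) (Finsupp.single j 1) j) ⊆ (T : Set ι) := by
    intro j hj
    by_contra hjT
    apply hj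
    simp [Module.End.mul_apply, hfcol j hjT]
  rw [trF, trF, finsum_eq_finset_sum_of_support_subset _ hsupfg,
    finsum_eq_finset_sum_of_support_subset _ hsupgf]
  calc ∑ j ∈ T, (f * g) (Finsupp.single j 1) j
      = ∑ j ∈ T, ∑ i ∈ T, g (Finsupp.single j 1) i * f (Finsupp.single i 1) j :=
        Finset.sum_congr rfl fun j _ => entry_formula f T (fun p hp => (hgT p hp).1) j j
    _ = ∑ i ∈ T, ∑ j ∈ T, g (Finsupp.single j 1) i * f (Finsupp.single i 1) j := Finset.sum_comm
    _ = ∑ i ∈ T, ∑ j ∈ T, f (Finsupp.single i 1) j * g (Finsupp.single j 1) i :=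
        Finset.sum_congr rfl fun i _ => Finset.sum_congr rfl fun j _ => mul_comm _ _
    _ = ∑ i ∈ T, (g * f) (Finsupp.single i 1) i :=
        Finset.sum_congr rfl fun i _ => (entry_formula g T (fun p hp => (hfT p hp).1) i i).symm

/-- The Lie algebra `sl_J(F)` of finitary trace-zero endomorphisms of `J →₀ F`. -/
def slJ (F : Type*) [Field F] (J : Type*) : LieSubalgebra F (Module.End F (J →₀ F)) where
  carrier := {f | Finitary F f ∧ trF F f = 0}
  add_mem' := fun {a b} ha hb => ⟨ha.1.add hb.1, by rw [trF_add ha.1 hb.1, ha.2, hb.2, add_zero]⟩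
  zero_mem' := ⟨Finitary.zero, trF_zero⟩
  smul_mem' := fun c x hx => ⟨hx.1.smul c, by rw [trF_smul, hx.2, mul_zero]⟩
  lie_mem' := fun {x y} hx hy => by
    have hxy : ⁅x, y⁆ = x * y - y * x := Ring.lie_def x y
    refine ⟨?_, ?_⟩
    · rw [Set.mem_setOf_eq] at *
      rw [hxy]
      exact (hx.1.mul hy.1).sub (hy.1.mul hx.1)
    · rw [hxy, trF_sub (hx.1.mul hy.1) (hy.1.mul hx.1), trF_mul_comm hx.1 hy.1, sub_self]

end SL2

/-- The trace form `κ (f, g) = tr (f ∘ g)` on `sl_J(F)`. -/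
noncomputable def kappa (F : Type*) [Field F] (J : Type*) (f g : slJ F J) : F :=
  trF F ((f : Module.End F (J →₀ F)) * (g : Module.End F (J →₀ F)))

section TraceForm

variable {F : Type*} [Field F] {ι : Type*}

noncomputable def matrixUnit (F : Type*) [Field F] {ι : Type*} (i j : ι) :
    Module.End F (ι →₀ F) :=
  Finsupp.lsingle i ∘ₗ Finsupp.lapply j

lemma matrixUnit_apply_single (i j l : ι) :
    matrixUnit F i j (Finsupp.single l 1) = Finsupp.single i (Finsupp.single l (1 : F) j) :=
  rfl

lemma finitary_matrixUnit (i j : ι) : Finitary F (matrixUnit F i j) := by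
  classical
  refine (Set.finite_singleton (i, j)).subset fun p hp => ?_
  simp only [Set.mem_ofPred_eq, matrixUnit_apply_single, Finsupp.single_apply] at hp
  split_ifs at hp with h₁ h₂ <;> simp_all [Prod.ext_iff]

lemma trF_mul_matrixUnit (f : Module.End F (ι →₀ F)) (i j : ι) :
    trF F (f * matrixUnit F i j) = f (Finsupp.single i 1) j := by
  rw [trF, finsum_eq_single _ j fun l hl => by
    simp [matrixUnit_apply_single, Finsupp.single_eq_of_ne' hl]]
  simp [matrixUnit_apply_single]

lemma trF_matrixUnit (i j : ι) : trF F (matrixUnit F i j) = Finsupp.single i (1 : F) j := by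
  simpa using trF_mul_matrixUnit (1 : Module.End F (ι →₀ F)) i j

lemma matrixUnit_mem_slJ {i j : ι} (h : i ≠ j) : matrixUnit F i j ∈ slJ F ι :=
  ⟨finitary_matrixUnit i j, by rw [trF_matrixUnit, Finsupp.single_eq_of_ne h.symm]⟩

lemma matrixUnit_sub_matrixUnit_mem_slJ (i j : ι) :
    matrixUnit F i i - matrixUnit F j j ∈ slJ F ι :=
  ⟨(finitary_matrixUnit i i).sub (finitary_matrixUnit j j), by
    rw [trF_sub (finitary_matrixUnit i i) (finitary_matrixUnit j j), trF_matrixUnit,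
      trF_matrixUnit, Finsupp.single_eq_same, Finsupp.single_eq_same, sub_self]⟩

lemma trF_lie_mul_add_trF_mul_lie {f g h : Module.End F (ι →₀ F)} (hf : Finitary F f)
    (hg : Finitary F g) (hh : Finitary F h) :
    trF F (⁅h, f⁆ * g) + trF F (f * ⁅h, g⁆) = 0 := by
  change trF F ((h * f - f * h) * g) + trF F (f * (h * g - g * h)) = 0
  rw [sub_mul (h * f) (f * h) g, mul_sub f (h * g) (g * h),
    trF_sub ((hh.mul hf).mul hg) ((hf.mul hh).mul hg),
    trF_sub (hf.mul (hh.mul hg)) (hf.mul (hg.mul hh)),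
    mul_assoc, mul_assoc, trF_mul_comm hh (hf.mul hg), ← mul_assoc f g h]
  ring

/-- Off-diagonal entries are detected by pairing with off-diagonal matrix units; on an infinite
index set every diagonal entry `f e_j j` can be compared with a vanishing one `f e_k k`, by pairing
with `E j j - E k k`. -/
lemma Finitary.eq_zero_of_forall_trF_mul_slJ [Infinite ι] {f : Module.End F (ι →₀ F)}
    (hf : Finitary F f) (h : ∀ g ∈ slJ F ι, trF F (f * g) = 0) : f = 0 := by
  refine Finsupp.basisSingleOne.ext fun j => column_eq_zero fun i => ?_
  rcases ne_or_eq j i with hji | rfl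
  · simpa [trF_mul_matrixUnit] using h _ (matrixUnit_mem_slJ hji)
  · obtain ⟨k, hk⟩ := ((trace_support_finite hf).union (Set.finite_singleton j)).exists_notMem
    simp only [Set.mem_union, Function.mem_support, Set.mem_singleton_iff, not_or,
      not_not] at hk
    have := h _ (matrixUnit_sub_matrixUnit_mem_slJ j k)
    rwa [mul_sub f (matrixUnit F j j) (matrixUnit F k k),
      trF_sub (hf.mul (finitary_matrixUnit j j)) (hf.mul (finitary_matrixUnit k k)),
      trF_mul_matrixUnit, trF_mul_matrixUnit, hk.1, sub_zero] at this

end TraceForm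

/-- The trace form `κ (f, g) = tr (f ∘ g)` on `sl_J(F)` (with `J` infinite) is a
symmetric bilinear form which is invariant and nondegenerate; moreover `f ∘ g` is
finitary whenever `f` and `g` are. -/
theorem traceForm_slJ_symm_invariant_nondegenerate (F : Type*) [Field F]
    (J : Type*) [Infinite J] :
    (∀ f g : slJ F J, Finitary F ((f : Module.End F (J →₀ F)) * (g : Module.End F (J →₀ F)))) ∧
    (∀ f g : slJ F J, kappa F J f g = kappa F J g f) ∧
    (∀ f f' g : slJ F J, kappa F J (f + f') g = kappa F J f g + kappa F J f' g) ∧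
    (∀ (c : F) (f g : slJ F J), kappa F J (c • f) g = c * kappa F J f g) ∧
    (∀ f g g' : slJ F J, kappa F J f (g + g') = kappa F J f g + kappa F J f g') ∧
    (∀ (c : F) (f g : slJ F J), kappa F J f (c • g) = c * kappa F J f g) ∧
    (∀ f g h : slJ F J, kappa F J ⁅h, f⁆ g + kappa F J f ⁅h, g⁆ = 0) ∧
    (∀ f : slJ F J, (∀ g : slJ F J, kappa F J f g = 0) → f = 0) := by
  have finitary_mul (f g : slJ F J) :
      Finitary F ((f : Module.End F (J →₀ F)) * (g : Module.End F (J →₀ F))) :=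
    f.2.1.mul g.2.1
  refine ⟨finitary_mul, fun f g => trF_mul_comm f.2.1 g.2.1, fun f f' g => ?_,
    fun c f g => ?_, fun f g g' => ?_, fun c f g => ?_,
    fun f g h => trF_lie_mul_add_trF_mul_lie f.2.1 g.2.1 h.2.1, fun f hf => ?_⟩
  · exact (congrArg (trF F) (add_mul _ _ _)).trans
      (trF_add (finitary_mul f g) (finitary_mul f' g))
  · exact (congrArg (trF F) (smul_mul_assoc c _ _)).trans (trF_smul c _)
  · exact (congrArg (trF F) (mul_add _ _ _)).trans
      (trF_add (finitary_mul f g) (finitary_mul f g'))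
  · exact (congrArg (trF F) (mul_smul_comm c _ _)).trans (trF_smul c _)
  · exact Subtype.ext (f.2.1.eq_zero_of_forall_trF_mul_slJ fun g hg => hf ⟨g, hg⟩)
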